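/- arXiv:1506.00226 — 2 statements merged into one kernel-verified Lean document; each statement's English description precedes it below -/
import Mathlib

section
/- Let a, b > 0 and v ∈ (0, 1) with 0 < v ≤ 1/2. Then (1 − v)a + v·b ≤ (1 − v)(√a − √b)² − r₁(⁴√(ab) − √b)² + K(⁴√h, 2)^{−r̂₁} · a^{1−v} b^{v}, where h = b/a, r = min{v, 1 − v}, r₁ = min{2r, 1 − 2r} and r̂₁ = min{2r₁, 1 − 2r₁}. -/
/-!
Put `g = √(ab)`; since `v ≤ 1/2` we have `r = v` and `r₁ = min(2v, 1 - 2v)`. Expanding the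
square, the claim is equivalent to
`2g - [2v·g + (1 - 2v)·b - r₁(√g - √b)²] ≤ K^(-r̂₁) · a^(1-v) b^v`.
The bracket is the Young mean of `g` and `b` with weight `1 - 2v` minus its Kittaneh–Manasrah
correction, and the Liao–Wu refinement of Young's inequality bounds it below by
`K(√(b/g))^r̂₁ · g^(2v) b^(1-2v) = K(⁴√h)^r̂₁ · a^v b^(1-v)`.
Since `a^v b^(1-v) · a^(1-v) b^v = g²`, AM–GM in the form `2√(pq) ≤ c·p + c⁻¹·q` finishes.
The Liao–Wu refinement itself is the Zuo–Shi–Fujii inequality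
`K(y/x)^min(l, 1-l) · x^(1-l) y^l ≤ (1-l)x + ly` applied to `x` and `√(xy)`, which in turn is
weighted AM–GM for `(x+y)/2` and `x` once one writes `K(y/x) = ((x+y)/2)² / (xy)`.
Both refinements are invariant under `(x, y, l) ↦ (y, x, 1 - l)` because `K(t⁻¹) = K(t)`, so only
`l ≤ 1/2` needs an argument.
-/

/-- The Kantorovich constant `K(t, 2) = (t + 1)^2 / (4 t)`. -/
noncomputable def Kant (t : ℝ) : ℝ := (t + 1) ^ 2 / (4 * t)

open Real

theorem Kant_pos {t : ℝ} (ht : 0 < t) : 0 < Kant t := by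
  unfold Kant
  positivity

theorem Kant_inv {t : ℝ} (ht : 0 < t) : Kant t⁻¹ = Kant t := by
  unfold Kant
  field_simp
  ring

theorem Kant_div {x y : ℝ} (hx : 0 < x) (hy : 0 < y) :
    Kant (y / x) = ((x + y) / 2) ^ 2 / (x * y) := by
  unfold Kant
  field_simp
  ring

theorem Kant_div_comm {x y : ℝ} (hx : 0 < x) (hy : 0 < y) : Kant (x / y) = Kant (y / x) := by
  rw [← inv_div, Kant_inv (div_pos hy hx)]

theorem Kant_div_rpow_mul_eq {x y l : ℝ} (hx : 0 < x) (hy : 0 < y) :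
    Kant (y / x) ^ l * (x ^ (1 - l) * y ^ l) = ((x + y) / 2) ^ (2 * l) * x ^ (1 - 2 * l) := by
  have hm : 0 < (x + y) / 2 := by positivity
  rw [Kant_div hx hy, div_rpow (by positivity) (by positivity), mul_rpow hx.le hy.le,
    ← rpow_natCast_mul hm.le, Nat.cast_ofNat, show 1 - l = 1 - 2 * l + l by ring, rpow_add hx]
  have := rpow_pos_of_pos hx l
  have := rpow_pos_of_pos hy l
  field_simp

theorem Kant_rpow_mul_le_of_le_half {x y l : ℝ} (hx : 0 < x) (hy : 0 < y) (hl0 : 0 ≤ l)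
    (hl : l ≤ 1 / 2) : Kant (y / x) ^ l * (x ^ (1 - l) * y ^ l) ≤ (1 - l) * x + l * y := by
  rw [Kant_div_rpow_mul_eq hx hy]
  calc ((x + y) / 2) ^ (2 * l) * x ^ (1 - 2 * l)
      ≤ 2 * l * ((x + y) / 2) + (1 - 2 * l) * x :=
        geom_mean_le_arith_mean2_weighted (by linarith) (by linarith) (by positivity) hx.le
          (by ring)
    _ = (1 - l) * x + l * y := by ring

theorem Kant_rpow_mul_le {x y l : ℝ} (hx : 0 < x) (hy : 0 < y) (hl0 : 0 ≤ l) (hl1 : l ≤ 1) :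
    Kant (y / x) ^ min l (1 - l) * (x ^ (1 - l) * y ^ l) ≤ (1 - l) * x + l * y := by
  rcases le_total l (1 / 2) with hl | hl
  · rw [min_eq_left (by linarith)]
    exact Kant_rpow_mul_le_of_le_half hx hy hl0 hl
  · rw [min_eq_right (by linarith), Kant_div_comm hy hx]
    calc Kant (x / y) ^ (1 - l) * (x ^ (1 - l) * y ^ l)
        = Kant (x / y) ^ (1 - l) * (y ^ (1 - (1 - l)) * x ^ (1 - l)) := by ring_nf
      _ ≤ (1 - (1 - l)) * y + (1 - l) * x :=
        Kant_rpow_mul_le_of_le_half hy hx (by linarith) (by linarith)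
      _ = (1 - l) * x + l * y := by ring

theorem sqrt_rpow_two_mul {x : ℝ} (hx : 0 ≤ x) (l : ℝ) : √x ^ (2 * l) = x ^ l := by
  rw [sqrt_eq_rpow, ← rpow_mul hx]
  ring_nf

theorem Kant_sqrt_rpow_mul_add_le_of_le_half {x y l : ℝ} (hx : 0 < x) (hy : 0 < y) (hl0 : 0 ≤ l)
    (hl : l ≤ 1 / 2) :
    Kant (√(y / x)) ^ min (2 * l) (1 - 2 * l) * (x ^ (1 - l) * y ^ l) + l * (√x - √y) ^ 2
      ≤ (1 - l) * x + l * y := by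
  have hsx := sqrt_pos.mpr hx
  have hsy := sqrt_pos.mpr hy
  have hgeom : x ^ (1 - 2 * l) * (√x * √y) ^ (2 * l) = x ^ (1 - l) * y ^ l := by
    rw [mul_rpow hsx.le hsy.le, sqrt_rpow_two_mul hx.le, sqrt_rpow_two_mul hy.le,
      show 1 - l = 1 - 2 * l + l by ring, rpow_add hx]
    ring
  have hratio : √x * √y / x = √(y / x) := by
    rw [sqrt_div' _ hx.le]
    field_simp
    rw [sq_sqrt hx.le]
  have hzuo := Kant_rpow_mul_le (y := √x * √y) hx (by positivity) (l := 2 * l) (by linarith)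
    (by linarith)
  rw [hratio, hgeom] at hzuo
  nlinarith [sq_sqrt hx.le, sq_sqrt hy.le]

theorem Kant_sqrt_rpow_mul_add_le {x y l : ℝ} (hx : 0 < x) (hy : 0 < y) (hl0 : 0 ≤ l)
    (hl1 : l ≤ 1) :
    Kant (√(y / x)) ^ min (2 * min l (1 - l)) (1 - 2 * min l (1 - l)) * (x ^ (1 - l) * y ^ l)
      + min l (1 - l) * (√x - √y) ^ 2 ≤ (1 - l) * x + l * y := by
  rcases le_total l (1 / 2) with hl | hl
  · rw [min_eq_left (show l ≤ 1 - l by linarith)]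
    exact Kant_sqrt_rpow_mul_add_le_of_le_half hx hy hl0 hl
  · have hsqrt : √(y / x) = (√(x / y))⁻¹ := by rw [← sqrt_inv, inv_div]
    rw [min_eq_right (show 1 - l ≤ l by linarith), hsqrt, Kant_inv (sqrt_pos.mpr (div_pos hx hy))]
    calc Kant √(x / y) ^ min (2 * (1 - l)) (1 - 2 * (1 - l)) * (x ^ (1 - l) * y ^ l)
          + (1 - l) * (√x - √y) ^ 2
        = Kant √(x / y) ^ min (2 * (1 - l)) (1 - 2 * (1 - l)) * (y ^ (1 - (1 - l)) * x ^ (1 - l))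
          + (1 - l) * (√y - √x) ^ 2 := by ring_nf
      _ ≤ (1 - (1 - l)) * y + (1 - l) * x :=
        Kant_sqrt_rpow_mul_add_le_of_le_half hy hx (by linarith) (by linarith)
      _ = (1 - l) * x + l * y := by ring

theorem two_mul_sqrt_mul_le {c p q : ℝ} (hc : 0 < c) (hp : 0 ≤ p) (hq : 0 ≤ q) :
    2 * √(p * q) ≤ c * p + c⁻¹ * q := by
  have hpq : √(p * q) = √(c * p) * √(c⁻¹ * q) := by
    rw [← sqrt_mul (by positivity)]
    field_simp
  rw [hpq]
  nlinarith [sq_nonneg (√(c * p) - √(c⁻¹ * q)), sq_sqrt (by positivity : 0 ≤ c * p),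
    sq_sqrt (by positivity : 0 ≤ c⁻¹ * q)]

theorem sqrt_sqrt_eq_rpow {x : ℝ} (hx : 0 ≤ x) : √(√x) = x ^ (1 / 4 : ℝ) := by
  rw [sqrt_eq_rpow, sqrt_eq_rpow, ← rpow_mul hx]
  norm_num

theorem sqrt_div_sqrt_mul {a b : ℝ} (ha : 0 < a) (hb : 0 < b) : √(b / √(a * b)) = √(√(b / a)) := by
  rw [sqrt_mul ha.le, sqrt_div' _ ha.le]
  congr 1
  field_simp
  rw [sq_sqrt hb.le]

theorem stmt_5 (a b v : ℝ) (ha : 0 < a) (hb : 0 < b) (hv0 : 0 < v) (hv : v ≤ 1 / 2)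
    (h r r1 rh1 : ℝ) (hh : h = b / a) (hr : r = min v (1 - v))
    (hr1 : r1 = min (2 * r) (1 - 2 * r)) (hrh1 : rh1 = min (2 * r1) (1 - 2 * r1)) :
    (1 - v) * a + v * b ≤
      (1 - v) * (Real.sqrt a - Real.sqrt b) ^ 2
        - r1 * ((a * b) ^ ((1 : ℝ) / 4) - Real.sqrt b) ^ 2
        + Kant (h ^ ((1 : ℝ) / 4)) ^ (-rh1) * (a ^ (1 - v) * b ^ v) := by
  have hab : 0 < a * b := mul_pos ha hb
  have hr1v : r1 = min (1 - 2 * v) (1 - (1 - 2 * v)) := by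
    rw [hr1, hr, min_eq_left (show v ≤ 1 - v by linarith), min_comm, sub_sub_cancel]
  have hK : 0 < Kant (h ^ ((1 : ℝ) / 4)) := Kant_pos (by rw [hh]; positivity)
  set C := Kant (h ^ ((1 : ℝ) / 4)) ^ rh1 with hC
  have hCpos : 0 < C := rpow_pos_of_pos hK _
  have hP : √(a * b) ^ (1 - (1 - 2 * v)) * b ^ (1 - 2 * v) = a ^ v * b ^ (1 - v) := by
    rw [sub_sub_cancel, sqrt_rpow_two_mul hab.le, mul_rpow ha.le hb.le, mul_assoc, ← rpow_add hb]
    ring_nf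
  have hPQ : a ^ v * b ^ (1 - v) * (a ^ (1 - v) * b ^ v) = a * b := by
    rw [mul_mul_mul_comm, ← rpow_add ha, ← rpow_add hb, add_sub_cancel, sub_add_cancel,
      rpow_one, rpow_one]
  have hyoung := Kant_sqrt_rpow_mul_add_le (sqrt_pos.mpr hab) hb (l := 1 - 2 * v) (by linarith)
    (by linarith)
  rw [← hr1v, ← hrh1, sqrt_div_sqrt_mul ha hb, sqrt_sqrt_eq_rpow (by positivity), ← hh, ← hC, hP,
    sqrt_sqrt_eq_rpow hab.le] at hyoung
  have hamgm := two_mul_sqrt_mul_le hCpos (by positivity) (by positivity) (p := a ^ v * b ^ (1 - v))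
    (q := a ^ (1 - v) * b ^ v)
  rw [hPQ] at hamgm
  have hexpand : (1 - v) * a + v * b
      = (1 - v) * (√a - √b) ^ 2 + 2 * (1 - v) * √(a * b) - (1 - 2 * v) * b := by
    rw [sqrt_mul ha.le]
    linear_combination (v - 1) * sq_sqrt ha.le + (v - 1) * sq_sqrt hb.le
  rw [rpow_neg hK.le, ← hC]
  linarith
end

section
/- Let A, B be n×n positive definite complex matrices and let m, m', M, M' be positive reals satisfying either m'·I ≤ A ≤ m·I < M·I ≤ B ≤ M'·I or m'·I ≤ B ≤ m·I < M·I ≤ A ≤ M'·I in the Loewner order. If 0 < v ≤ 1/2, then A∇_v B ≤ 2(1 − v)(A∇B − A#B) − r₁(A#B − 2(A#_{3/4}B) + B) + K(h^{1/4}, 2)^{−r̂₁} · (A#_v B) in the Loewner order, where h = M/m, r = min{v, 1 − v}, r₁ = min{2r, 1 − 2r} and r̂₁ = min{2r₁, 1 − 2r₁}. -/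
open Matrix
open scoped ComplexOrder

/-- Real power of a matrix, defined for Hermitian matrices via the spectral
decomposition (functional calculus); junk value otherwise. -/
noncomputable def mrpow {n : ℕ} (A : Matrix (Fin n) (Fin n) ℂ) (t : ℝ) :
    Matrix (Fin n) (Fin n) ℂ :=
  if h : A.IsHermitian then
    (h.eigenvectorUnitary : Matrix (Fin n) (Fin n) ℂ)
      * Matrix.diagonal (fun i => ((h.eigenvalues i ^ t : ℝ) : ℂ))
      * star (h.eigenvectorUnitary : Matrix (Fin n) (Fin n) ℂ)
  else A

/-- Weighted arithmetic mean `A ∇_v B = (1 - v) A + v B`. -/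
noncomputable def anabla {n : ℕ} (v : ℝ) (A B : Matrix (Fin n) (Fin n) ℂ) :
    Matrix (Fin n) (Fin n) ℂ :=
  ((1 - v : ℝ) : ℂ) • A + ((v : ℝ) : ℂ) • B

/-- Weighted geometric mean `A #_v B = A^{1/2} (A^{-1/2} B A^{-1/2})^v A^{1/2}`. -/
noncomputable def asharp {n : ℕ} (v : ℝ) (A B : Matrix (Fin n) (Fin n) ℂ) :
    Matrix (Fin n) (Fin n) ℂ :=
  mrpow A (1 / 2) * mrpow (mrpow A (-(1 / 2)) * B * mrpow A (-(1 / 2))) v * mrpow A (1 / 2)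

/-- Heinz operator mean `H_v(A, B) = (A #_v B + A #_{1-v} B) / 2`. -/
noncomputable def heinz {n : ℕ} (v : ℝ) (A B : Matrix (Fin n) (Fin n) ℂ) :
    Matrix (Fin n) (Fin n) ℂ :=
  ((1 / 2 : ℝ) : ℂ) • (asharp v A B + asharp (1 - v) A B)

/-- The Loewner order: `loewner X Y` iff `Y - X` is positive semidefinite. -/
def loewner {n : ℕ} (X Y : Matrix (Fin n) (Fin n) ℂ) : Prop := (Y - X).PosSemidef

/-!
Write `X = A^{-1/2} B A^{-1/2}`. Every mean in the statement has the form `A^{1/2} f(X) A^{1/2}`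
for a scalar function `f`, and congruence by `A^{1/2}` as well as the functional calculus of `X`
are monotone, so it suffices to compare the two scalar functions on the spectrum of `X`. The
Loewner bounds put this spectrum inside `(0, 1/h] ∪ [h, ∞)`.

For the scalar inequality, the substitution `s = x^{-1/4}` turns it, in each of the cases
`v ≤ 1/4` and `v ≥ 1/4`, into `(1 + u) s - u ≤ K(s)^{-min(u, 1-u)} s^{1+u}` for a suitable
`u ∈ [0, 1]`. This is the refined Young inequality `K(t)^{min(u, 1-u)} t^u ≤ (1 - u) + u t` of
Zuo, Shi and Fujii at `t = 1/s`, combined with `((1 + u) s - u) ((1 - u) s + u) ≤ s²`. Finally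
`K(x^{1/4}) ≥ K(h^{1/4})`, because `K` increases on `[1, ∞)` and `K(1/t) = K(t)`.
-/

lemma kant_inv (t : ℝ) : Kant t⁻¹ = Kant t := by
  rcases eq_or_ne t 0 with rfl | ht
  · simp
  · unfold Kant
    field_simp
    ring

lemma one_le_kant {t : ℝ} (ht : 0 < t) : 1 ≤ Kant t := by
  rw [Kant, le_div_iff₀ (by positivity)]
  nlinarith [sq_nonneg (t - 1)]

lemma kant_monotoneOn : MonotoneOn Kant (Set.Ici 1) := by
  intro a (ha : 1 ≤ a) b (hb : 1 ≤ b) hab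
  rw [Kant, Kant, div_le_div_iff₀ (by positivity) (by positivity)]
  nlinarith [mul_nonneg (sub_nonneg.2 hab) (by nlinarith : (0 : ℝ) ≤ a * b - 1)]

lemma kant_le_kant_of_le_or_le_inv {H t : ℝ} (hH : 1 ≤ H) (ht : 0 < t) (h : H ≤ t ∨ t ≤ H⁻¹) :
    Kant H ≤ Kant t := by
  rcases h with h | h
  · exact kant_monotoneOn hH (hH.trans h) h
  · rw [← kant_inv t]
    exact kant_monotoneOn hH (hH.trans (le_inv_of_le_inv₀ ht h)) (le_inv_of_le_inv₀ ht h)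

/-- The refined Young inequality of Zuo, Shi and Fujii. -/
lemma kant_rpow_mul_rpow_le {u t : ℝ} (hu₀ : 0 ≤ u) (hu₁ : u ≤ 1) (ht : 0 < t) :
    Kant t ^ min u (1 - u) * t ^ u ≤ 1 - u + u * t := by
  have hmid : 0 ≤ (1 + t) / 2 := by positivity
  have hsq : ((1 + t) / 2) ^ (2 : ℝ) = Kant t * t := by
    rw [Real.rpow_two, Kant]
    field_simp
    ring
  have hK : 0 ≤ Kant t := zero_le_one.trans (one_le_kant ht)
  rcases le_total u (1 / 2) with hu | hu
  · have h := Real.geom_mean_le_arith_mean2_weighted (by linarith) (by linarith) zero_le_one hmid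
      (by ring : 1 - 2 * u + 2 * u = 1)
    rw [Real.one_rpow, one_mul, Real.rpow_mul hmid, hsq, Real.mul_rpow hK ht.le] at h
    rw [min_eq_left (by linarith)]
    linarith
  · have h := Real.geom_mean_le_arith_mean2_weighted (by linarith) (by linarith) hmid ht.le
      (by ring : 2 - 2 * u + (2 * u - 1) = 1)
    rw [show 2 - 2 * u = 2 * (1 - u) by ring, Real.rpow_mul hmid, hsq, Real.mul_rpow hK ht.le,
      mul_assoc, ← Real.rpow_add ht, show 1 - u + (2 * u - 1) = u by ring] at h
    rw [min_eq_right (by linarith)]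
    linarith

lemma add_mul_sub_le_kant_rpow_neg_mul_rpow {u s : ℝ} (hu₀ : 0 ≤ u) (hu₁ : u ≤ 1) (hs : 0 < s) :
    (1 + u) * s - u ≤ Kant s ^ (-min u (1 - u)) * s ^ (1 + u) := by
  have hK : 0 < Kant s := zero_lt_one.trans_le (one_le_kant hs)
  set k := Kant s ^ min u (1 - u)
  have hk : 0 < k := Real.rpow_pos_of_pos hK _
  have hsu : 0 < s ^ u := Real.rpow_pos_of_pos hs u
  have hzsf := kant_rpow_mul_rpow_le hu₀ hu₁ (inv_pos.2 hs)
  rw [kant_inv, Real.inv_rpow hs.le, ← div_eq_mul_inv, div_le_iff₀ hsu] at hzsf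
  have hks : k * s ≤ ((1 - u) * s + u) * s ^ u := by
    calc k * s ≤ (1 - u + u * s⁻¹) * s ^ u * s := by gcongr
      _ = ((1 - u) * s + u) * s ^ u := by field_simp
  rw [Real.rpow_neg hK.le, ← div_eq_inv_mul, le_div_iff₀ hk, Real.rpow_one_add' hs.le (by linarith)]
  rcases le_or_gt ((1 + u) * s - u) 0 with hp | hp
  · nlinarith
  · -- `((1 + u) s - u) ((1 - u) s + u) = s² - u² (s - 1)² ≤ s²`
    nlinarith [mul_le_mul_of_nonneg_left hks hp.le, sq_nonneg (u * (s - 1))]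

lemma scalar_refinement_inv_quarter {v s r₁ rh₁ : ℝ} (hv₀ : 0 < v) (hv : v ≤ 1 / 2) (hs : 0 < s)
    (hr₁ : r₁ = min (2 * v) (1 - 2 * v)) (hrh₁ : rh₁ = min (2 * r₁) (1 - 2 * r₁)) :
    2 * v - 1 + (2 - 2 * v) * s ^ 2 + r₁ * (s - 1) ^ 2 ≤ Kant s ^ (-rh₁) * s ^ (4 - 4 * v) := by
  rcases le_total (1 / 4) v with hv' | hv'
  · rw [min_eq_right (by linarith)] at hr₁
    have hrh₁' : rh₁ = min (2 - 4 * v) (1 - (2 - 4 * v)) := by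
      rw [hrh₁, hr₁]; congr 1 <;> ring
    have h := add_mul_sub_le_kant_rpow_neg_mul_rpow (u := 2 - 4 * v) (by linarith) (by linarith) hs
    calc 2 * v - 1 + (2 - 2 * v) * s ^ 2 + r₁ * (s - 1) ^ 2
        = ((1 + (2 - 4 * v)) * s - (2 - 4 * v)) * s := by rw [hr₁]; ring
      _ ≤ Kant s ^ (-rh₁) * s ^ (1 + (2 - 4 * v)) * s := by rw [hrh₁']; gcongr
      _ = Kant s ^ (-rh₁) * s ^ (4 - 4 * v) := by
          rw [mul_assoc, ← Real.rpow_add_one hs.ne']; ring_nf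
  · rw [min_eq_left (by linarith)] at hr₁
    have hrh₁' : rh₁ = min (1 - 4 * v) (1 - (1 - 4 * v)) := by
      rw [hrh₁, hr₁, min_comm]; congr 1 <;> ring
    have h := add_mul_sub_le_kant_rpow_neg_mul_rpow (u := 1 - 4 * v) (by linarith) (by linarith) hs
    have hgap : 0 ≤ (s - 1) ^ 2 * ((2 - 4 * v) * s + (1 - 4 * v)) :=
      mul_nonneg (sq_nonneg _) (by nlinarith)
    calc 2 * v - 1 + (2 - 2 * v) * s ^ 2 + r₁ * (s - 1) ^ 2
        ≤ ((1 + (1 - 4 * v)) * s - (1 - 4 * v)) * s ^ 2 := by rw [hr₁]; nlinarith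
      _ ≤ Kant s ^ (-rh₁) * s ^ (1 + (1 - 4 * v)) * s ^ 2 := by rw [hrh₁']; gcongr
      _ = Kant s ^ (-rh₁) * s ^ (4 - 4 * v) := by
          rw [mul_assoc, ← Real.rpow_natCast, ← Real.rpow_add hs]; ring_nf

lemma scalar_refinement {v x r₁ rh₁ : ℝ} (hv₀ : 0 < v) (hv : v ≤ 1 / 2) (hx : 0 < x)
    (hr₁ : r₁ = min (2 * v) (1 - 2 * v)) (hrh₁ : rh₁ = min (2 * r₁) (1 - 2 * r₁)) :
    (2 * v - 1) * x + (2 - 2 * v) * x ^ (1 / 2 : ℝ)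
        + r₁ * (x ^ (1 / 2 : ℝ) - 2 * x ^ (3 / 4 : ℝ) + x)
      ≤ Kant (x ^ (1 / 4 : ℝ)) ^ (-rh₁) * x ^ v := by
  have hs : 0 < x ^ (-(1 / 4) : ℝ) := Real.rpow_pos_of_pos hx _
  have hKs : Kant (x ^ (-(1 / 4) : ℝ)) = Kant (x ^ (1 / 4 : ℝ)) := by
    rw [Real.rpow_neg hx.le, kant_inv]
  have hs₂ : (x ^ (-(1 / 4) : ℝ)) ^ 2 * x = x ^ (1 / 2 : ℝ) := by
    rw [← Real.rpow_natCast, ← Real.rpow_mul hx.le, ← Real.rpow_add_one hx.ne']; norm_num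
  have hs₁ : x ^ (-(1 / 4) : ℝ) * x = x ^ (3 / 4 : ℝ) := by
    rw [← Real.rpow_add_one hx.ne']; norm_num
  have h := mul_le_mul_of_nonneg_right (scalar_refinement_inv_quarter hv₀ hv hs hr₁ hrh₁) hx.le
  rw [hKs, mul_assoc, ← Real.rpow_mul hx.le, ← Real.rpow_add_one hx.ne'] at h
  calc (2 * v - 1) * x + (2 - 2 * v) * x ^ (1 / 2 : ℝ)
        + r₁ * (x ^ (1 / 2 : ℝ) - 2 * x ^ (3 / 4 : ℝ) + x)
      = (2 * v - 1 + (2 - 2 * v) * (x ^ (-(1 / 4) : ℝ)) ^ 2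
          + r₁ * (x ^ (-(1 / 4) : ℝ) - 1) ^ 2) * x := by
        rw [← hs₂, ← hs₁]; ring
    _ ≤ _ := h
    _ = Kant (x ^ (1 / 4 : ℝ)) ^ (-rh₁) * x ^ v := by ring_nf

lemma scalar_refinement_of_le_or_le_inv {v h x r₁ rh₁ : ℝ} (hv₀ : 0 < v) (hv : v ≤ 1 / 2)
    (hh : 1 ≤ h) (hx : 0 < x) (hxh : h ≤ x ∨ x ≤ h⁻¹)
    (hr₁ : r₁ = min (2 * v) (1 - 2 * v)) (hrh₁ : rh₁ = min (2 * r₁) (1 - 2 * r₁)) :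
    1 - v + v * x ≤ 2 * (1 - v) * (1 - 1 / 2 + 1 / 2 * x - x ^ (1 / 2 : ℝ))
      - r₁ * (x ^ (1 / 2 : ℝ) - 2 * x ^ (3 / 4 : ℝ) + x)
      + Kant (h ^ (1 / 4 : ℝ)) ^ (-rh₁) * x ^ v := by
  have hr₁₀ : 0 ≤ r₁ := hr₁ ▸ le_min (by linarith) (by linarith)
  have hr₁₁ : r₁ ≤ 1 / 2 := by
    rw [hr₁]; rcases min_cases (2 * v) (1 - 2 * v) with ⟨h₁, h₂⟩ | ⟨h₁, h₂⟩ <;> linarith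
  have hrh₁₀ : 0 ≤ rh₁ := hrh₁ ▸ le_min (by linarith) (by linarith)
  have hH : 1 ≤ h ^ (1 / 4 : ℝ) := Real.one_le_rpow hh (by norm_num)
  have hxq : 0 < x ^ (1 / 4 : ℝ) := Real.rpow_pos_of_pos hx _
  have hK : Kant (h ^ (1 / 4 : ℝ)) ≤ Kant (x ^ (1 / 4 : ℝ)) := by
    refine kant_le_kant_of_le_or_le_inv hH hxq (hxh.imp (fun hxh => ?_) (fun hxh => ?_))
    · exact Real.rpow_le_rpow (by linarith) hxh (by norm_num)
    · rw [← Real.inv_rpow (by linarith)]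
      exact Real.rpow_le_rpow hx.le hxh (by norm_num)
  have hKpow : Kant (x ^ (1 / 4 : ℝ)) ^ (-rh₁) ≤ Kant (h ^ (1 / 4 : ℝ)) ^ (-rh₁) :=
    Real.rpow_le_rpow_of_nonpos (zero_lt_one.trans_le (one_le_kant (by linarith))) hK
      (neg_nonpos.2 hrh₁₀)
  have := scalar_refinement hv₀ hv hx hr₁ hrh₁
  nlinarith [mul_le_mul_of_nonneg_right hKpow (Real.rpow_nonneg hx.le v)]

open scoped MatrixOrder

section Matrices

variable {n : ℕ} {A B : Matrix (Fin n) (Fin n) ℂ}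

lemma mrpow_eq_cfc (hA : A.IsHermitian) (t : ℝ) : mrpow A t = cfc (fun x : ℝ => x ^ t) A := by
  rw [mrpow, dif_pos hA, hA.cfc_eq, Matrix.IsHermitian.cfc, Unitary.conjStarAlgAut_apply]
  rfl

lemma isHermitian_mrpow (hA : A.IsHermitian) (t : ℝ) : (mrpow A t).IsHermitian := by
  rw [mrpow_eq_cfc hA]
  exact cfc_predicate _ A

lemma Matrix.PosDef.pos_of_mem_spectrum (hA : A.PosDef) {x : ℝ} (hx : x ∈ spectrum ℝ A) : 0 < x :=
  (Matrix.isStrictlyPositive_iff_posDef.2 hA).spectrum_pos hx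

lemma mrpow_add (hA : A.PosDef) (s t : ℝ) : mrpow A (s + t) = mrpow A s * mrpow A t := by
  simp only [mrpow_eq_cfc hA.1]
  have hc (f : ℝ → ℝ) := A.finite_real_spectrum.continuousOn f
  rw [← cfc_mul (hf := hc _) (hg := hc _)]
  exact cfc_congr fun x hx => Real.rpow_add (hA.pos_of_mem_spectrum hx) s t

lemma mrpow_zero (hA : A.IsHermitian) : mrpow A 0 = 1 := by
  rw [mrpow_eq_cfc hA]
  simp only [Real.rpow_zero]
  exact cfc_const_one ℝ A hA

lemma mrpow_one (hA : A.IsHermitian) : mrpow A 1 = A := by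
  rw [mrpow_eq_cfc hA]
  simp only [Real.rpow_one]
  exact cfc_id' ℝ A hA

lemma loewner_iff_le {X Y : Matrix (Fin n) (Fin n) ℂ} : loewner X Y ↔ X ≤ Y := Iff.rfl

lemma ofReal_smul_one (c : ℝ) : (c : ℂ) • (1 : Matrix (Fin n) (Fin n) ℂ) = algebraMap ℝ _ c := by
  rw [Algebra.algebraMap_eq_smul_one, Complex.coe_smul]

lemma mul_algebraMap_mul_self (P : Matrix (Fin n) (Fin n) ℂ) (c : ℝ) :
    P * algebraMap ℝ _ c * P = c • (P * P) := by
  rw [Algebra.algebraMap_eq_smul_one, mul_smul_comm, mul_one, smul_mul_assoc]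

noncomputable def invSqrtCongr (A B : Matrix (Fin n) (Fin n) ℂ) : Matrix (Fin n) (Fin n) ℂ :=
  mrpow A (-(1 / 2)) * B * mrpow A (-(1 / 2))

lemma isHermitian_invSqrtCongr (hA : A.IsHermitian) (hB : B.IsHermitian) :
    (invSqrtCongr A B).IsHermitian :=
  IsSelfAdjoint.conjugate_self hB (isHermitian_mrpow hA _)

section PosDef

variable (hA : A.PosDef)
include hA

lemma mrpow_half_mul_mrpow_neg_half : mrpow A (1 / 2) * mrpow A (-(1 / 2)) = 1 := by
  rw [← mrpow_add hA, add_neg_cancel, mrpow_zero hA.1]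

lemma mrpow_neg_half_mul_mrpow_half : mrpow A (-(1 / 2)) * mrpow A (1 / 2) = 1 := by
  rw [← mrpow_add hA, neg_add_cancel, mrpow_zero hA.1]

lemma mrpow_half_mul_mrpow_half : mrpow A (1 / 2) * mrpow A (1 / 2) = A := by
  rw [← mrpow_add hA, add_halves, mrpow_one hA.1]

lemma mrpow_neg_half_mul_mul_mrpow_neg_half :
    mrpow A (-(1 / 2)) * A * mrpow A (-(1 / 2)) = 1 := by
  nth_rw 2 [← mrpow_half_mul_mrpow_half hA]
  rw [← mul_assoc, mrpow_neg_half_mul_mrpow_half hA, one_mul, mrpow_half_mul_mrpow_neg_half hA]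

lemma mrpow_half_mul_invSqrtCongr_mul :
    mrpow A (1 / 2) * invSqrtCongr A B * mrpow A (1 / 2) = B := by
  simp only [invSqrtCongr, mul_assoc, mrpow_neg_half_mul_mrpow_half hA, mul_one]
  rw [← mul_assoc, mrpow_half_mul_mrpow_neg_half hA, one_mul]

lemma posDef_invSqrtCongr (hB : B.PosDef) : (invSqrtCongr A B).PosDef := by
  have hP := isHermitian_mrpow hA.1 (-(1 / 2))
  have hinj : Function.Injective (mrpow A (-(1 / 2))).mulVec :=
    Matrix.mulVec_injective_iff_isUnit.2 <| (Matrix.isUnit_iff_isUnit_det _).2 <|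
      Matrix.isUnit_det_of_right_inverse (mrpow_neg_half_mul_mrpow_half hA)
  simpa only [invSqrtCongr, hP.eq] using hB.conjTranspose_mul_mul_same hinj

lemma algebraMap_le_invSqrtCongr {m M : ℝ} (hm : 0 < m) (hM : 0 ≤ M)
    (hAm : A ≤ algebraMap ℝ _ m) (hMB : algebraMap ℝ _ M ≤ B) :
    algebraMap ℝ _ (M / m) ≤ invSqrtCongr A B := by
  set P := mrpow A (-(1 / 2))
  have hP : IsSelfAdjoint P := isHermitian_mrpow hA.1 _
  have hPP : algebraMap ℝ _ m⁻¹ ≤ P * P := by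
    have h := smul_le_smul_of_nonneg_left (hP.conjugate_le_conjugate hAm) (inv_nonneg.2 hm.le)
    rwa [mrpow_neg_half_mul_mul_mrpow_neg_half hA, mul_algebraMap_mul_self, smul_smul,
      inv_mul_cancel₀ hm.ne', one_smul, ← Algebra.algebraMap_eq_smul_one] at h
  calc algebraMap ℝ _ (M / m) = M • algebraMap ℝ _ m⁻¹ := by
        rw [div_eq_mul_inv, map_mul, Algebra.smul_def]
    _ ≤ M • (P * P) := smul_le_smul_of_nonneg_left hPP hM
    _ = P * algebraMap ℝ _ M * P := (mul_algebraMap_mul_self P M).symm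
    _ ≤ P * B * P := hP.conjugate_le_conjugate hMB

lemma invSqrtCongr_le_algebraMap {m M : ℝ} (hM : 0 < M) (hm : 0 ≤ m)
    (hBm : B ≤ algebraMap ℝ _ m) (hMA : algebraMap ℝ _ M ≤ A) :
    invSqrtCongr A B ≤ algebraMap ℝ _ (m / M) := by
  set P := mrpow A (-(1 / 2))
  have hP : IsSelfAdjoint P := isHermitian_mrpow hA.1 _
  have hPP : P * P ≤ algebraMap ℝ _ M⁻¹ := by
    have h := smul_le_smul_of_nonneg_left (hP.conjugate_le_conjugate hMA) (inv_nonneg.2 hM.le)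
    rwa [mrpow_neg_half_mul_mul_mrpow_neg_half hA, mul_algebraMap_mul_self, smul_smul,
      inv_mul_cancel₀ hM.ne', one_smul, ← Algebra.algebraMap_eq_smul_one] at h
  calc P * B * P ≤ P * algebraMap ℝ _ m * P := hP.conjugate_le_conjugate hBm
    _ = m • (P * P) := mul_algebraMap_mul_self P m
    _ ≤ m • algebraMap ℝ _ M⁻¹ := smul_le_smul_of_nonneg_left hPP hm
    _ = algebraMap ℝ _ (m / M) := by rw [div_eq_mul_inv, map_mul, Algebra.smul_def]

lemma anabla_eq_conj_cfc (hB : B.IsHermitian) (v : ℝ) :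
    anabla v A B = mrpow A (1 / 2) * cfc (fun x : ℝ => 1 - v + v * x) (invSqrtCongr A B)
      * mrpow A (1 / 2) := by
  have hX : IsSelfAdjoint (invSqrtCongr A B) := isHermitian_invSqrtCongr hA.1 hB
  have hc (f : ℝ → ℝ) := (invSqrtCongr A B).finite_real_spectrum.continuousOn f
  rw [cfc_add (hf := hc _) (hg := hc _), cfc_const _ _ hX, cfc_const_mul_id _ _ hX,
    Algebra.algebraMap_eq_smul_one, anabla]
  simp only [mul_add, add_mul, mul_smul_comm, smul_mul_assoc, mul_one, Complex.coe_smul,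
    mrpow_half_mul_mrpow_half hA, mrpow_half_mul_invSqrtCongr_mul hA]

lemma asharp_eq_conj_cfc (hB : B.IsHermitian) (t : ℝ) :
    asharp t A B = mrpow A (1 / 2) * cfc (fun x : ℝ => x ^ t) (invSqrtCongr A B)
      * mrpow A (1 / 2) := by
  rw [asharp, ← mrpow_eq_cfc (isHermitian_invSqrtCongr hA.1 hB)]
  rfl

lemma refined_rhs_eq_conj_cfc (hB : B.IsHermitian) (v r₁ c : ℝ) :
    ((2 * (1 - v) : ℝ) : ℂ) • (anabla (1 / 2) A B - asharp (1 / 2) A B)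
        - ((r₁ : ℝ) : ℂ) • (asharp (1 / 2) A B - (2 : ℂ) • asharp (3 / 4) A B + B)
        + ((c : ℝ) : ℂ) • asharp v A B
      = mrpow A (1 / 2) * cfc (fun x : ℝ => 2 * (1 - v) * (1 - 1 / 2 + 1 / 2 * x - x ^ (1 / 2 : ℝ))
          - r₁ * (x ^ (1 / 2 : ℝ) - 2 * x ^ (3 / 4 : ℝ) + x) + c * x ^ v) (invSqrtCongr A B)
        * mrpow A (1 / 2) := by
  have hX : IsSelfAdjoint (invSqrtCongr A B) := isHermitian_invSqrtCongr hA.1 hB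
  have hc (f : ℝ → ℝ) := (invSqrtCongr A B).finite_real_spectrum.continuousOn f
  simp (disch := first | exact hX | exact hc _) only [cfc_add, cfc_sub, cfc_const_mul,
    cfc_const_mul_id, cfc_const, cfc_id']
  simp only [mul_add, add_mul, mul_sub, sub_mul, mul_smul_comm, smul_mul_assoc, mul_one,
    Algebra.algebraMap_eq_smul_one, ← asharp_eq_conj_cfc hA hB, mrpow_half_mul_mrpow_half hA,
    mrpow_half_mul_invSqrtCongr_mul hA, anabla, Complex.coe_smul]
  module

end PosDef

end Matrices

theorem stmt_13_general {n : ℕ} (A B : Matrix (Fin n) (Fin n) ℂ) (m m' M M' v h r r1 rh1 : ℝ)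
    (hA : A.PosDef) (hB : B.PosDef)
    (hm : 0 < m) (hM : 0 < M) (hmM : m < M)
    (hcond : (loewner ((m' : ℂ) • 1) A ∧ loewner A ((m : ℂ) • 1) ∧
        loewner ((M : ℂ) • 1) B ∧ loewner B ((M' : ℂ) • 1)) ∨
      (loewner ((m' : ℂ) • 1) B ∧ loewner B ((m : ℂ) • 1) ∧
        loewner ((M : ℂ) • 1) A ∧ loewner A ((M' : ℂ) • 1)))
    (hh : h = M / m) (hr : r = min v (1 - v))
    (hr1 : r1 = min (2 * r) (1 - 2 * r)) (hrh1 : rh1 = min (2 * r1) (1 - 2 * r1))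
    (hv0 : 0 < v) (hv : v ≤ 1 / 2) :
    loewner (anabla v A B)
      (((2 * (1 - v) : ℝ) : ℂ) • (anabla (1 / 2) A B - asharp (1 / 2) A B)
        - ((r1 : ℝ) : ℂ) • (asharp (1 / 2) A B - (2 : ℂ) • asharp (3 / 4) A B + B)
        + ((Kant (h ^ ((1 : ℝ) / 4)) ^ (-rh1) : ℝ) : ℂ) • asharp v A B) := by
  obtain rfl : r = v := hr.trans (min_eq_left (by linarith))
  have hX := posDef_invSqrtCongr hA hB
  have hXsa : IsSelfAdjoint (invSqrtCongr A B) := hX.1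
  have hspec : ∀ x ∈ spectrum ℝ (invSqrtCongr A B), h ≤ x ∨ x ≤ h⁻¹ := by
    simp only [loewner_iff_le, ofReal_smul_one] at hcond
    rcases hcond with ⟨-, hAm, hMB, -⟩ | ⟨-, hBm, hMA, -⟩
    · have hle := algebraMap_le_invSqrtCongr hA hm hM.le hAm hMB
      exact fun x hx => .inl (hh ▸ (algebraMap_le_iff_le_spectrum hXsa).1 hle x hx)
    · have hle := invSqrtCongr_le_algebraMap hA hM hm.le hBm hMA
      exact fun x hx => .inr (by
        rw [hh, inv_div]; exact (le_algebraMap_iff_spectrum_le hXsa).1 hle x hx)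
  rw [loewner_iff_le, anabla_eq_conj_cfc hA hB.1, refined_rhs_eq_conj_cfc hA hB.1]
  have hc (f : ℝ → ℝ) := (invSqrtCongr A B).finite_real_spectrum.continuousOn f
  refine IsSelfAdjoint.conjugate_le_conjugate (cfc_mono (hf := hc _) (hg := hc _) fun x hx => ?_)
    (isHermitian_mrpow hA.1 _)
  exact scalar_refinement_of_le_or_le_inv hv0 hv (hh ▸ (one_le_div hm).2 hmM.le)
    (hX.pos_of_mem_spectrum hx) (hspec x hx) hr1 hrh1

theorem stmt_13 {n : ℕ} (A B : Matrix (Fin n) (Fin n) ℂ) (m m' M M' v h r r1 rh1 : ℝ)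
    (hA : A.PosDef) (hB : B.PosDef)
    (hm' : 0 < m') (hm : 0 < m) (hM : 0 < M) (hM' : 0 < M') (hmM : m < M)
    (hcond : (loewner ((m' : ℂ) • 1) A ∧ loewner A ((m : ℂ) • 1) ∧
        loewner ((M : ℂ) • 1) B ∧ loewner B ((M' : ℂ) • 1)) ∨
      (loewner ((m' : ℂ) • 1) B ∧ loewner B ((m : ℂ) • 1) ∧
        loewner ((M : ℂ) • 1) A ∧ loewner A ((M' : ℂ) • 1)))
    (hh : h = M / m) (hr : r = min v (1 - v))
    (hr1 : r1 = min (2 * r) (1 - 2 * r)) (hrh1 : rh1 = min (2 * r1) (1 - 2 * r1))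
    (hv0 : 0 < v) (hv : v ≤ 1 / 2) :
    loewner (anabla v A B)
      (((2 * (1 - v) : ℝ) : ℂ) • (anabla (1 / 2) A B - asharp (1 / 2) A B)
        - ((r1 : ℝ) : ℂ) • (asharp (1 / 2) A B - (2 : ℂ) • asharp (3 / 4) A B + B)
        + ((Kant (h ^ ((1 : ℝ) / 4)) ^ (-rh1) : ℝ) : ℂ) • asharp v A B) :=
  stmt_13_general A B m m' M M' v h r r1 rh1 hA hB hm hM hmM hcond hh hr hr1 hrh1 hv0 hv
end
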